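/- arXiv:2604.15157 — 7 statements merged into one kernel-verified Lean document; each statement's English description precedes it below -/
import Mathlib

section
/- Let a, b, N be integers with a, b ≥ 0 and a + b < N. Then (a + b + 1) * binomial(a+b, a) divides lcm{1, 2, ..., N}. -/
open Nat Finset

/-- Key valuation bound: for a prime `p` and `a ≤ n`,
`ν_p(choose n a) ≤ log p (n+1) - ν_p(n+1)`. -/
lemma choose_factorization_le {p n a : ℕ} (hp : p.Prime) (hkn : a ≤ n) :
    (Nat.choose n a).factorization p ≤
      Nat.log p (n + 1) - (n + 1).factorization p := by
  set d := (n + 1).factorization p with hd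
  set L := Nat.log p (n + 1) with hL
  rw [Nat.factorization_def _ hp, @padicValNat_def _ ⟨hp⟩ _ (Nat.choose_pos hkn).ne']
  rw [← Nat.cast_le (α := ℕ∞), ← FiniteMultiplicity.emultiplicity_eq_multiplicity
    (Nat.finiteMultiplicity_iff.2 ⟨hp.ne_one, Nat.choose_pos hkn⟩)]
  have hlog : Nat.log p n < L + 1 :=
    Nat.lt_succ_of_le (Nat.log_mono_right (Nat.le_succ n))
  rw [hp.emultiplicity_choose hkn hlog]
  rw [Nat.cast_le]
  calc #{i ∈ Ico 1 (L + 1) | p ^ i ≤ a % p ^ i + (n - a) % p ^ i}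
      ≤ #(Ico (d + 1) (L + 1)) := by
        apply Finset.card_le_card
        intro i hi
        simp only [Finset.mem_filter, Finset.mem_Ico] at hi ⊢
        obtain ⟨⟨h1, h2⟩, hcond⟩ := hi
        refine ⟨?_, h2⟩
        by_contra hle
        push_neg at hle
        have hile : i ≤ d := by omega
        have hpi : 0 < p ^ i := Nat.pow_pos (n := i) hp.pos
        have hdvd : p ^ i ∣ n + 1 :=
          dvd_trans (pow_dvd_pow p hile) (Nat.ordProj_dvd (n + 1) p)
        set x := a % p ^ i + (n - a) % p ^ i with hx
        have hxmod : x % p ^ i = n % p ^ i := by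
          rw [hx, ← Nat.add_mod, Nat.add_sub_cancel' hkn]
        have hx1 : (x + 1) % p ^ i = (n + 1) % p ^ i := by
          rw [Nat.add_mod x 1, Nat.add_mod n 1, hxmod]
        have hdvd2 : p ^ i ∣ x + 1 := by
          rw [Nat.dvd_iff_mod_eq_zero, hx1]
          exact Nat.mod_eq_zero_of_dvd hdvd
        have ha' : a % p ^ i < p ^ i := Nat.mod_lt _ hpi
        have hb' : (n - a) % p ^ i < p ^ i := Nat.mod_lt _ hpi
        obtain ⟨t, ht⟩ := hdvd2
        have ht2 : 2 ≤ t := by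
          rcases Nat.lt_or_ge t 2 with h' | h'
          · interval_cases t <;> omega
          · exact h'
        have : 2 * p ^ i ≤ x + 1 := by
          calc 2 * p ^ i ≤ t * p ^ i := Nat.mul_le_mul_right _ ht2
          _ = x + 1 := by rw [ht]; ring
        omega
    _ = L + 1 - (d + 1) := Nat.card_Ico _ _
    _ ≤ L - d := by omega

theorem stmt_1 (a b N : ℕ) (h : a + b < N) :
    ((a + b + 1) * Nat.choose (a + b) a) ∣ (Finset.Icc 1 N).lcm id := by
  set n := a + b with hn
  set L := (Finset.Icc 1 N).lcm id with hLdef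
  have hL0 : L ≠ 0 := by
    rw [hLdef, Ne, Finset.lcm_eq_zero_iff]
    rintro ⟨x, hx, hx0⟩
    simp only [id] at hx0
    rw [Finset.mem_Icc] at hx
    omega
  have hm0 : (n + 1) * Nat.choose n a ≠ 0 :=
    Nat.mul_ne_zero ((by omega : n + 1 ≠ 0)) (Nat.choose_pos (Nat.le_add_right a b)).ne'
  rw [← Nat.factorization_le_iff_dvd hm0 hL0]
  intro p
  by_cases hp : p.Prime
  · -- bound the valuation
    have hd : (n + 1).factorization p ≤ Nat.log p (n + 1) := by
      rcases eq_or_ne ((n + 1).factorization p) 0 with h0 | h0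
      · simp [h0]
      · have := Nat.ordProj_le p ((by omega : n + 1 ≠ 0))
        exact (Nat.le_log_iff_pow_le hp.one_lt ((by omega : n + 1 ≠ 0))).mpr this
    have hkey : ((n + 1) * Nat.choose n a).factorization p ≤ Nat.log p (n + 1) := by
      rw [Nat.factorization_mul ((by omega : n + 1 ≠ 0))
        (Nat.choose_pos (Nat.le_add_right a b)).ne']
      simp only [Finsupp.coe_add, Pi.add_apply]
      have h2 := choose_factorization_le (n := n) (a := a) hp (Nat.le_add_right a b)
      simp only [← hn] at h2 ⊢
      omega
    have hlogN : Nat.log p (n + 1) ≤ Nat.log p N :=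
      Nat.log_mono_right (by omega)
    have hle : p ^ ((n + 1) * Nat.choose n a).factorization p ≤ N := by
      calc p ^ ((n + 1) * Nat.choose n a).factorization p
          ≤ p ^ Nat.log p N := Nat.pow_le_pow_right hp.pos (le_trans hkey hlogN)
        _ ≤ N := Nat.pow_log_le_self p (by omega)
    have hmem : p ^ ((n + 1) * Nat.choose n a).factorization p ∈ Finset.Icc 1 N :=
      Finset.mem_Icc.mpr ⟨Nat.one_le_pow _ _ hp.pos, hle⟩
    have hdvdL : p ^ ((n + 1) * Nat.choose n a).factorization p ∣ L :=
      Finset.dvd_lcm (f := id) hmem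
    exact (Nat.Prime.pow_dvd_iff_le_factorization hp hL0).mp hdvdL
  · simp [Nat.factorization_eq_zero_of_not_prime _ hp]
end

section
/- Let a, b, N be integers with a, b ≥ 0 and a + b < N. Define S_N as the set of integer polynomials P of degree < N with ∫₀¹ P(x)dx = 1/lcm{1,...,N}. If for every prime p ≤ N there exists an integer n_p with 0 ≤ n_p < N - a - b and ν_p((a+b+n_p+1)·binomial(a+b+n_p, a)) ≥ ⌊log N / log p⌋, then there exists a polynomial P ∈ S_N such that x^a (1-x)^b divides P(x) in ℤ[x]. -/
open intervalIntegral in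
lemma Jint : ∀ (m a : ℕ), ∫ x in (0:ℝ)..1, x^a * (1-x)^m
    = 1/((a+m+1) * (a+m).choose a) := by
  intro m
  induction m with
  | zero => intro a; simp [integral_pow]
  | succ m ih =>
    intro a
    have hF : ∀ x ∈ Set.uIcc (0:ℝ) 1, HasDerivAt (fun x : ℝ => x^(a+1) * (1-x)^(m+1))
        ((a+1) * (x^a * (1-x)^(m+1)) - (m+1) * (x^(a+1) * (1-x)^m)) x := by
      intro x _
      have h1 : HasDerivAt (fun x : ℝ => x^(a+1)) ((a+1) * x^a) x := by
        simpa using hasDerivAt_pow (a+1) x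
      have hs : HasDerivAt (fun x : ℝ => 1 - x) (-1) x := by
        simpa using (hasDerivAt_id x).const_sub (1:ℝ)
      have h2 : HasDerivAt (fun x : ℝ => (1-x)^(m+1)) (((m+1) * (1-x)^m) * (-1)) x := by
        exact HasDerivAt.comp x (by simpa using hasDerivAt_pow (m+1) (1-x)) hs
      have := h1.fun_mul h2
      refine this.congr_deriv ?_
      push_cast; ring
    have hint : ∫ x in (0:ℝ)..1, ((a+1) * (x^a * (1-x)^(m+1)) - (m+1) * (x^(a+1) * (1-x)^m)) = 0 := by
      rw [integral_eq_sub_of_hasDerivAt hF (by apply Continuous.intervalIntegrable; continuity)]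
      norm_num
    have hi1 : IntervalIntegrable (fun x : ℝ => x^a * (1-x)^(m+1)) MeasureTheory.volume 0 1 := by
      apply Continuous.intervalIntegrable; continuity
    have hi2 : IntervalIntegrable (fun x : ℝ => x^(a+1) * (1-x)^m) MeasureTheory.volume 0 1 := by
      apply Continuous.intervalIntegrable; continuity
    rw [integral_sub ((hi1.const_mul _)) ((hi2.const_mul _)),
      integral_const_mul, integral_const_mul, ih (a+1), sub_eq_zero] at hint
    have hA : ((a:ℝ)+1) ≠ 0 := by positivity
    have hc : (a+m+1).choose (a+1) * (a+1) = (a+m+1).choose a * (m+1) := by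
      have := Nat.choose_succ_right_eq (a+m+1) a
      simpa [show a+m+1-a = m+1 by omega] using this
    have hcR : ((a+m+1).choose (a+1) : ℝ) * (a+1) = ((a+m+1).choose a : ℝ) * (m+1) := by
      exact_mod_cast congrArg (fun n : ℕ => (n:ℝ)) hc
    have hC1 : (0:ℝ) < ((a+1+m).choose (a+1) : ℝ) := by
      exact_mod_cast Nat.choose_pos (by omega)
    have hC0 : (0:ℝ) < ((a+(m+1)).choose a : ℝ) := by
      exact_mod_cast Nat.choose_pos (by omega)
    have e1 : ∫ x in (0:ℝ)..1, x^a * (1-x)^(m+1)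
        = ((m:ℝ)+1) * (1 / ((↑(a+1) + ↑m + 1) * ((a+1+m).choose (a+1)))) / ((a:ℝ)+1) :=
      eq_div_of_mul_eq hA (by rw [mul_comm]; exact hint)
    rw [e1]
    rw [div_eq_iff hA]
    have hY : (((a:ℝ)+1 + ↑m + 1) * ((a+1+m).choose (a+1))) ≠ 0 := by positivity
    have hW : (((a:ℝ) + (↑m+1) + 1) * ((a+(m+1)).choose a)) ≠ 0 := by positivity
    field_simp
    push_cast [show a+1+m = a+m+1 from by ring, show a+(m+1) = a+m+1 from by ring] at hcR ⊢
    nlinarith [hcR, sq_nonneg ((m:ℝ))]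


-- Bezout for finset gcd over ℕ with ℤ coefficients
lemma bez {ι : Type*} [DecidableEq ι] (s : Finset ι) (f : ι → ℕ) :
    ∃ c : ι → ℤ, ((s.gcd f : ℕ) : ℤ) = ∑ i ∈ s, c i * (f i : ℤ) := by
  induction s using Finset.induction_on with
  | empty => exact ⟨fun _ => 0, by simp⟩
  | insert j s ha ih =>
    obtain ⟨c, hc⟩ := ih
    refine ⟨fun i => if i = j then Nat.gcdA (f j) (s.gcd f) else c i * Nat.gcdB (f j) (s.gcd f), ?_⟩
    rw [Finset.gcd_insert, Finset.sum_insert ha]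
    have : GCDMonoid.gcd (f j) (s.gcd f) = Nat.gcd (f j) (s.gcd f) := rfl
    rw [this]
    rw [Nat.gcd_eq_gcd_ab (f j) (s.gcd f)]
    simp only [if_pos rfl]
    rw [Finset.sum_congr rfl (fun i hi => by rw [if_neg (by rintro rfl; exact ha hi)])]
    rw [show ∑ i ∈ s, c i * Nat.gcdB (f j) (s.gcd f) * (f i : ℤ)
      = (∑ i ∈ s, c i * (f i:ℤ)) * Nat.gcdB (f j) (s.gcd f) by rw [Finset.sum_mul]; congr 1; ext i; ring]
    rw [← hc]; simp; ring

-- factorization of finset lcm bounded by sup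
lemma lcm_fact {ι : Type*} (p : ℕ) (s : Finset ι) (f : ι → ℕ) (hf : ∀ i ∈ s, f i ≠ 0)
    (c : ℕ) (hb : ∀ i ∈ s, (f i).factorization p ≤ c) :
    (s.lcm f).factorization p ≤ c := by
  classical
  induction s using Finset.induction_on with
  | empty => simp
  | insert j s ha ih =>
    rw [Finset.lcm_insert]
    have h1 : f j ≠ 0 := hf j (Finset.mem_insert_self j s)
    have h2 : s.lcm f ≠ 0 := by
      intro h0
      rw [Finset.lcm_eq_zero_iff] at h0
      obtain ⟨i, hi, hi0⟩ := h0
      exact hf i (Finset.mem_insert_of_mem hi) hi0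
    have : (lcm (f j) (s.lcm f)).factorization = (f j).factorization ⊔ (s.lcm f).factorization :=
      Nat.factorization_lcm h1 h2
    rw [this]
    simp only [Finsupp.sup_apply, sup_le_iff]
    exact ⟨hb j (Finset.mem_insert_self j s),
      ih (fun i hi => hf i (Finset.mem_insert_of_mem hi)) (fun i hi => hb i (Finset.mem_insert_of_mem hi))⟩

theorem stmt_8 (a b N : ℕ) (hN : a + b < N)
    (h : ∀ p : ℕ, p.Prime → p ≤ N → ∃ np : ℕ, np < N - a - b ∧
      Nat.log p N ≤ padicValNat p ((a + b + np + 1) * Nat.choose (a + b + np) a)) :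
    ∃ P : Polynomial ℤ, P.degree < N ∧
      (∫ x in (0:ℝ)..1, Polynomial.aeval x P) = 1 / (((Finset.Icc 1 N).lcm id : ℕ) : ℝ) ∧
      Polynomial.X ^ a * (1 - Polynomial.X) ^ b ∣ P := by
  have hK : 0 < N - a - b := by omega
  set K := N - a - b with hKdef
  set D : ℕ → ℕ := fun n => (a + b + n + 1) * Nat.choose (a + b + n) a with hDdef
  have hD : ∀ n, D n ≠ 0 := fun n =>
    Nat.mul_ne_zero (by omega) (Nat.choose_pos (by omega)).ne'
  set L : ℕ := (Finset.Icc 1 N).lcm id with hLdef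
  have hL : L ≠ 0 := by
    intro h0
    rw [Finset.lcm_eq_zero_iff] at h0
    obtain ⟨i, hi, hi0⟩ := h0
    simp only [Finset.mem_Icc] at hi
    have : i = 0 := by simpa using hi0
    omega
  set M : ℕ := (Finset.range K).lcm D with hMdef
  have hM : M ≠ 0 := by
    intro h0
    rw [Finset.lcm_eq_zero_iff] at h0
    obtain ⟨i, _, hi0⟩ := h0
    exact hD i hi0
  have hDM : ∀ n ∈ Finset.range K, D n ∣ M := fun n hn => Finset.dvd_lcm hn
  -- key valuation comparison
  have hC : ∀ p : ℕ, p.Prime → ∃ n, n < K ∧ L.factorization p ≤ (D n).factorization p := by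
    intro p hp
    have hLf : L.factorization p ≤ Nat.log p N := by
      apply lcm_fact p _ id (fun i hi => by
        simp only [Finset.mem_Icc] at hi; simp only [id_eq]; omega)
      intro k hk
      simp only [Finset.mem_Icc, id_eq] at hk ⊢
      have h1 : p ^ (k.factorization p) ∣ k := Nat.ordProj_dvd k p
      have h2 : p ^ (k.factorization p) ≤ N := (Nat.le_of_dvd (by omega) h1).trans hk.2
      exact (Nat.le_log_iff_pow_le hp.one_lt (y := N) (by omega)).mpr h2
    by_cases hpN : p ≤ N
    · obtain ⟨np, hnp, hv⟩ := h p hp hpN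
      refine ⟨np, hnp, ?_⟩
      rw [show (D np).factorization p = padicValNat p (D np) from Nat.factorization_def _ hp]
      exact hLf.trans hv
    · refine ⟨0, hK, ?_⟩
      have : Nat.log p N = 0 := Nat.log_eq_zero_iff.mpr (Or.inl (by omega))
      omega
  have hLM : L ∣ M := by
    rw [← Nat.factorization_le_iff_dvd hL hM]
    intro p
    by_cases hp : p.Prime
    · obtain ⟨n, hn, hv⟩ := hC p hp
      exact hv.trans ((Nat.factorization_le_iff_dvd (hD n) hM).mpr
        (hDM n (Finset.mem_range.mpr hn)) p)
    · simp [Nat.factorization_eq_zero_of_not_prime _ hp]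
  have hML : M / L ≠ 0 := by
    have := Nat.le_of_dvd (Nat.pos_of_ne_zero hM) hLM
    have := Nat.div_pos this (Nat.pos_of_ne_zero hL)
    omega
  set G : ℕ := (Finset.range K).gcd (fun n => M / D n) with hGdef
  have hMD0 : ∀ n ∈ Finset.range K, M / D n ≠ 0 := by
    intro n hn
    have := Nat.le_of_dvd (Nat.pos_of_ne_zero hM) (hDM n hn)
    have := Nat.div_pos this (Nat.pos_of_ne_zero (hD n))
    omega
  have hG0 : G ≠ 0 := by
    intro h0
    rw [Finset.gcd_eq_zero_iff] at h0
    exact hMD0 0 (Finset.mem_range.mpr hK) (h0 0 (Finset.mem_range.mpr hK))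
  have hGdvd : G ∣ M / L := by
    rw [← Nat.factorization_le_iff_dvd hG0 hML]
    intro p
    by_cases hp : p.Prime
    · obtain ⟨n, hn, hv⟩ := hC p hp
      have hmem := Finset.mem_range.mpr hn
      have h1 : G ∣ M / D n := Finset.gcd_dvd hmem
      have h2 : G.factorization p ≤ (M / D n).factorization p :=
        (Nat.factorization_le_iff_dvd hG0 (hMD0 n hmem)).mpr h1 p
      rw [Nat.factorization_div (hDM n hmem)] at h2
      rw [Nat.factorization_div hLM]
      have h3 : (D n).factorization p ≤ M.factorization p :=
        (Nat.factorization_le_iff_dvd (hD n) hM).mpr (hDM n hmem) p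
      simp only [Finsupp.tsub_apply] at h2 ⊢
      omega
    · simp [Nat.factorization_eq_zero_of_not_prime _ hp]
  obtain ⟨t, ht⟩ := hGdvd
  obtain ⟨c, hc⟩ := bez (Finset.range K) (fun n => M / D n)
  set e : ℕ → ℤ := fun i => c i * (t : ℤ) with hedef
  have hsum : ((M / L : ℕ) : ℤ) = ∑ i ∈ Finset.range K, e i * ((M / D i : ℕ) : ℤ) := by
    rw [ht]
    push_cast
    rw [hc, Finset.sum_mul]
    apply Finset.sum_congr rfl
    intro i _
    exact mul_right_comm _ _ _
  -- real-number identity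
  have hDcast : ∀ i ∈ Finset.range K, ((M / D i : ℕ) : ℝ) = (M : ℝ) / (D i : ℝ) := by
    intro i hi
    rw [Nat.cast_div (hDM i hi) (by exact_mod_cast hD i)]
  have hLcast : ((M / L : ℕ) : ℝ) = (M : ℝ) / (L : ℝ) := by
    rw [Nat.cast_div hLM (by exact_mod_cast hL)]
  have hMne : (M : ℝ) ≠ 0 := by exact_mod_cast hM
  have hLne : (L : ℝ) ≠ 0 := by exact_mod_cast hL
  have hkey : ∑ i ∈ Finset.range K, (e i : ℝ) * (1 / (D i : ℝ)) = 1 / (L : ℝ) := by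
    have hR : ((M / L : ℕ) : ℝ) = ∑ i ∈ Finset.range K, (e i : ℝ) * ((M / D i : ℕ) : ℝ) := by
      have h' : ((((M / L : ℕ) : ℤ)) : ℝ)
          = ((∑ i ∈ Finset.range K, e i * ((M / D i : ℕ) : ℤ) : ℤ) : ℝ) := by rw [hsum]
      push_cast at h'
      exact h'
    rw [hLcast, Finset.sum_congr rfl (fun i hi => by rw [hDcast i hi])] at hR
    have hfrac : ∀ d : ℝ, (M:ℝ)/d/(M:ℝ) = 1/d := fun d => by
      rw [div_div, mul_comm, ← div_div, div_self hMne]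
    rw [← hfrac (L:ℝ), hR, Finset.sum_div]
    exact Finset.sum_congr rfl fun i _ => by rw [mul_div_assoc, hfrac]
  have hcont : ∀ i : ℕ, Continuous (fun x : ℝ => (e i : ℝ) * (x^a * (1-x)^(b+i))) :=
    fun i => continuous_const.mul ((continuous_pow a).mul
      ((continuous_const.sub continuous_id).pow (b+i)))
  refine ⟨∑ i ∈ Finset.range K, Polynomial.C (e i) *
      (Polynomial.X ^ a * (1 - Polynomial.X) ^ (b + i)), ?_, ?_, ?_⟩
  · refine lt_of_le_of_lt (Polynomial.degree_sum_le _ _) ?_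
    refine (Finset.sup_lt_iff (show (⊥ : WithBot ℕ) < (N : ℕ) from by
      exact_mod_cast WithBot.bot_lt_coe N)).mpr ?_
    intro i hi
    have hdeg : (Polynomial.C (e i) *
        (Polynomial.X ^ a * (1 - Polynomial.X) ^ (b + i)) : Polynomial ℤ).degree
        ≤ ((a + (b + i) : ℕ) : WithBot ℕ) := by
      compute_degree
      exact le_of_eq (by push_cast; rfl)
    refine lt_of_le_of_lt hdeg ?_
    have hik : i < K := Finset.mem_range.mp hi
    exact_mod_cast Nat.cast_lt.mpr (show a + (b + i) < N by omega)
  · have hPval : ∀ x : ℝ, (Polynomial.aeval x) (∑ i ∈ Finset.range K, Polynomial.C (e i) *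
        (Polynomial.X ^ a * (1 - Polynomial.X) ^ (b + i)))
        = ∑ i ∈ Finset.range K, (e i : ℝ) * (x^a * (1-x)^(b+i)) := by
      intro x
      rw [map_sum]
      apply Finset.sum_congr rfl
      intro i _
      simp [mul_comm]
    rw [intervalIntegral.integral_congr (g := fun x => ∑ i ∈ Finset.range K,
      (e i : ℝ) * (x^a * (1-x)^(b+i))) (fun x _ => hPval x)]
    rw [intervalIntegral.integral_finset_sum
      (fun i _ => (hcont i).intervalIntegrable _ _)]
    rw [Finset.sum_congr rfl (fun i _ => intervalIntegral.integral_const_mul _ _)]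
    rw [Finset.sum_congr rfl (fun i _ => by rw [Jint (b+i) a])]
    rw [← hkey]
    apply Finset.sum_congr rfl
    intro i _
    congr 1
    have h1 : ((a:ℝ) + ((b+i : ℕ) : ℝ) + 1) * ((a+(b+i)).choose a) = (D i : ℝ) := by
      rw [hDdef]
      push_cast [show a+(b+i) = a+b+i from by ring]
      ring
    rw [h1]
  · apply Finset.dvd_sum
    intro i _
    exact ⟨Polynomial.C (e i) * (1 - Polynomial.X) ^ i, by rw [pow_add]; ring⟩
end

section
/- Let a, b, N be integers with a, b ≥ 0 and a + b < N, and let S_N be the set of integer polynomials P of degree < N with ∫₀¹ P(x)dx = 1/lcm{1,...,N}. If there exists P ∈ S_N such that x^a(1-x)^b divides P(x) in ℤ[x], then for every prime p ≤ N there exists an integer n_p with 0 ≤ n_p < N - a - b and ν_p((a+b+n_p+1)·binomial(a+b+n_p, a)) ≥ ⌊log N / log p⌋. -/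
open Polynomial Finset

lemma beta_nat (j : ℕ) : ∀ i : ℕ,
    (∫ x in (0:ℝ)..1, x ^ i * (1 - x) ^ j)
      = (Nat.factorial i * Nat.factorial j : ℝ) / Nat.factorial (i + j + 1) := by
  induction j with
  | zero =>
      intro i
      have h0 : ((i+1).factorial : ℝ) = (i+1) * i.factorial := by
        exact_mod_cast Nat.factorial_succ i
      simp only [pow_zero, mul_one, integral_pow, Nat.factorial_zero, Nat.cast_one]
      rw [one_pow, zero_pow (by omega : i+1 ≠ 0)]
      rw [show i + 0 + 1 = i + 1 from rfl, h0]
      have : (i:ℝ) + 1 ≠ 0 := by positivity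
      have hf : (i.factorial : ℝ) ≠ 0 := by positivity
      field_simp
      norm_num
  | succ j IH =>
      intro i
      have hcongr : Set.EqOn (fun x : ℝ => x ^ i * (1 - x) ^ (j+1))
          (fun x : ℝ => x ^ i * (1 - x) ^ j - x ^ (i+1) * (1 - x) ^ j)
          (Set.uIcc (0:ℝ) 1) := by
        intro x _
        simp only
        ring
      rw [intervalIntegral.integral_congr hcongr,
        intervalIntegral.integral_sub
          ((by fun_prop : Continuous fun x : ℝ => x ^ i * (1 - x) ^ j).intervalIntegrable 0 1)
          ((by fun_prop : Continuous fun x : ℝ => x ^ (i+1) * (1 - x) ^ j).intervalIntegrable 0 1),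
        IH i, IH (i+1)]
      have e1 : i + 1 + j + 1 = (i + j + 1) + 1 := by omega
      have e2 : i + (j + 1) + 1 = (i + j + 1) + 1 := by omega
      rw [e1, e2]
      have h1 : (((i+j+1) + 1).factorial : ℝ) = (i+j+2) * (i+j+1).factorial := by
        rw [Nat.factorial_succ]; push_cast; ring
      have h2 : ((i+1).factorial : ℝ) = (i+1) * i.factorial := by
        exact_mod_cast Nat.factorial_succ i
      have h3 : ((j+1).factorial : ℝ) = (j+1) * j.factorial := by
        exact_mod_cast Nat.factorial_succ j
      rw [h1, h2, h3]
      have hf1 : ((i+j+1).factorial : ℝ) ≠ 0 := by positivity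
      have hf2 : ((i:ℝ)+(j:ℝ)+2) ≠ 0 := by positivity
      field_simp
      ring



theorem stmt_9 (a b N : ℕ) (hN : a + b < N)
    (h : ∃ P : Polynomial ℤ, P.degree < N ∧
      (∫ x in (0:ℝ)..1, Polynomial.aeval x P) = 1 / (((Finset.Icc 1 N).lcm id : ℕ) : ℝ) ∧
      Polynomial.X ^ a * (1 - Polynomial.X) ^ b ∣ P) :
    ∀ p : ℕ, p.Prime → p ≤ N → ∃ np : ℕ, np < N - a - b ∧
      Nat.log p N ≤ padicValNat p ((a + b + np + 1) * Nat.choose (a + b + np) a) := by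
  intro p hp hpN
  haveI : Fact p.Prime := ⟨hp⟩
  by_contra hcon
  push_neg at hcon
  obtain ⟨P, hdeg, hint, Q, rfl⟩ := h
  set q : ℕ := (Finset.Icc 1 N).lcm id with hq
  set M : ℕ := N - a - b with hM
  set L : ℕ := Nat.log p N with hL
  set D : ℕ → ℕ := fun n => (a + b + n + 1) * Nat.choose (a + b + n) a with hD
  -- basic facts
  have hq0 : q ≠ 0 := by
    rw [hq]
    intro h0
    rw [Finset.lcm_eq_zero_iff] at h0
    simp only [Set.mem_image, id] at h0
    obtain ⟨x, hx, hx0⟩ := h0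
    simp only [Finset.mem_coe, Finset.mem_Icc] at hx
    omega
  have hDpos : ∀ n, 0 < D n := by
    intro n
    exact Nat.mul_pos (by omega) (Nat.choose_pos (by omega))
  have hDfac : ∀ n : ℕ, D n * (a.factorial * (b + n).factorial) = (a + b + n + 1).factorial := by
    intro n
    have h1 : Nat.choose (a + b + n) a * a.factorial * (b + n).factorial
        = (a + b + n).factorial := by
      have := Nat.choose_mul_factorial_mul_factorial (show a ≤ a + b + n by omega)
      rwa [show a + b + n - a = b + n by omega] at this
    calc D n * (a.factorial * (b + n).factorial)
        = (a + b + n + 1) * (Nat.choose (a + b + n) a * a.factorial * (b + n).factorial) := by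
          rw [hD]; ring
      _ = (a + b + n + 1) * (a + b + n).factorial := by rw [h1]
      _ = (a + b + n + 1).factorial := (Nat.factorial_succ _).symm
  -- the factor is nonzero
  have h1X : (1 - Polynomial.X : ℤ[X]) = -(Polynomial.X - Polynomial.C 1) := by
    rw [map_one]; ring
  have h1Xdeg : (1 - Polynomial.X : ℤ[X]).natDegree = 1 := by
    rw [h1X, natDegree_neg, natDegree_X_sub_C]
  have h1Xne : (1 - Polynomial.X : ℤ[X]) ≠ 0 := by
    rw [h1X, neg_ne_zero]
    exact X_sub_C_ne_zero 1
  have hfacne : (Polynomial.X ^ a * (1 - Polynomial.X) ^ b : ℤ[X]) ≠ 0 :=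
    mul_ne_zero (pow_ne_zero _ X_ne_zero) (pow_ne_zero _ h1Xne)
  have hQ0 : Q ≠ 0 := by
    intro h0
    rw [h0, mul_zero] at hint
    simp only [map_zero, intervalIntegral.integral_zero] at hint
    have : ((q:ℝ))⁻¹ ≠ 0 := by
      simp [hq0]
    rw [eq_comm, one_div] at hint
    exact this hint
  have hPne : (Polynomial.X ^ a * (1 - Polynomial.X) ^ b * Q : ℤ[X]) ≠ 0 :=
    mul_ne_zero hfacne hQ0
  have hndeg : (Polynomial.X ^ a * (1 - Polynomial.X) ^ b * Q : ℤ[X]).natDegree < N :=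
    (Polynomial.natDegree_lt_iff_degree_lt hPne).2 hdeg
  have hQdeg : Q.natDegree < M := by
    rw [natDegree_mul hfacne hQ0, natDegree_mul (pow_ne_zero _ X_ne_zero) (pow_ne_zero _ h1Xne),
      natDegree_pow, natDegree_pow, natDegree_X, h1Xdeg] at hndeg
    omega
  -- R
  set R : ℤ[X] := Q.comp (1 - Polynomial.X) with hR
  have hRdeg : R.natDegree < M := by
    rw [hR, natDegree_comp, h1Xdeg, mul_one]
    exact hQdeg
  have hQR : R.comp (1 - Polynomial.X) = Q := by
    rw [hR, comp_assoc]
    have : ((1 : ℤ[X]) - Polynomial.X).comp (1 - Polynomial.X) = Polynomial.X := by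
      simp [sub_comp]
    rw [this, comp_X]
  -- pointwise integrand
  have hpt : Set.EqOn (fun x : ℝ => (Polynomial.aeval x) (Polynomial.X ^ a * (1 - Polynomial.X) ^ b * Q))
      (fun x : ℝ => ∑ n ∈ Finset.range M, (R.coeff n : ℝ) * (x ^ a * (1 - x) ^ (b + n)))
      (Set.uIcc (0:ℝ) 1) := by
    intro x _
    simp only
    rw [← hQR, map_mul, map_mul, map_pow, map_pow, aeval_X, map_sub, map_one, aeval_X,
      aeval_comp, map_sub, map_one, aeval_X]
    rw [Polynomial.aeval_eq_sum_range' (lt_of_lt_of_le hRdeg le_rfl)]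
    rw [Finset.mul_sum]
    apply Finset.sum_congr rfl
    intro n _
    rw [zsmul_eq_mul, pow_add]
    push_cast
    ring
  -- compute the integral
  have hint2 : ∑ n ∈ Finset.range M, (R.coeff n : ℝ) *
      ((a.factorial * (b + n).factorial : ℝ) / (a + b + n + 1).factorial) = 1 / (q : ℝ) := by
    rw [← hint, intervalIntegral.integral_congr hpt,
      intervalIntegral.integral_finset_sum (fun n _ =>
        ((by fun_prop : Continuous fun x : ℝ => (R.coeff n : ℝ) * (x ^ a * (1 - x) ^ (b + n))).intervalIntegrable 0 1))]
    apply Finset.sum_congr rfl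
    intro n _
    rw [intervalIntegral.integral_const_mul, beta_nat (b + n) a,
      show a + (b + n) + 1 = a + b + n + 1 by omega]
  -- transfer to ℚ
  have hrat : ∑ n ∈ Finset.range M, (R.coeff n : ℚ) / (D n : ℚ) = 1 / (q : ℚ) := by
    have hterm : ∀ n : ℕ, ((R.coeff n : ℚ) / (D n : ℚ) : ℝ)
        = (R.coeff n : ℝ) * ((a.factorial * (b + n).factorial : ℝ) / (a + b + n + 1).factorial) := by
      intro n
      have hcast : ((D n : ℝ)) * (a.factorial * (b + n).factorial) = (a + b + n + 1).factorial := by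
        exact_mod_cast hDfac n
      have hD0 : (D n : ℝ) ≠ 0 := by
        exact_mod_cast (hDpos n).ne'
      have hfa : (a.factorial : ℝ) ≠ 0 := by positivity
      have hfb : ((b+n).factorial : ℝ) ≠ 0 := by positivity
      push_cast
      rw [← hcast]
      field_simp
    apply (Rat.cast_injective (α := ℝ))
    push_cast
    rw [← hint2]
    apply Finset.sum_congr rfl
    intro n _
    have := hterm n
    push_cast at this ⊢
    linarith [this]
  -- padic norm bound on terms
  have hbound : ∀ n ∈ Finset.range M,
      padicNorm p ((R.coeff n : ℚ) / (D n : ℚ)) ≤ (p : ℚ) ^ ((L : ℤ) - 1) := by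
    intro n hn
    have hnM : n < M := Finset.mem_range.mp hn
    have hv : (padicValNat p (D n) : ℤ) ≤ (L : ℤ) - 1 := by
      have h' : padicValNat p (D n) < L := hcon n (by omega)
      omega
    have hD0 : (D n : ℚ) ≠ 0 := by exact_mod_cast (hDpos n).ne'
    have hDnorm : padicNorm p ((D n : ℚ)) = (p : ℚ) ^ (-(padicValNat p (D n) : ℤ)) := by
      simp [padicNorm, hD0, padicValRat.of_nat]
    rw [padicNorm.div, hDnorm, div_eq_mul_inv, ← zpow_neg, neg_neg]
    have h1 : padicNorm p ((R.coeff n : ℚ)) ≤ 1 := by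
      have := padicNorm.of_int (p := p) (R.coeff n)
      simpa using this
    have hppos : (0:ℚ) < (p:ℚ) ^ ((padicValNat p (D n)) : ℤ) := by
      apply zpow_pos
      exact_mod_cast hp.pos
    calc padicNorm p ((R.coeff n : ℚ)) * (p : ℚ) ^ ((padicValNat p (D n)) : ℤ)
        ≤ 1 * (p : ℚ) ^ ((padicValNat p (D n)) : ℤ) := by
          apply mul_le_mul_of_nonneg_right h1 hppos.le
      _ = (p : ℚ) ^ ((padicValNat p (D n)) : ℤ) := one_mul _
      _ ≤ (p : ℚ) ^ ((L : ℤ) - 1) := by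
          apply zpow_le_zpow_right₀ (by exact_mod_cast hp.one_le) hv
  -- final contradiction
  have hsum : padicNorm p (1 / (q:ℚ)) ≤ (p:ℚ) ^ ((L:ℤ) - 1) := by
    rw [← hrat]
    apply padicNorm.sum_le' hbound
    positivity
  have hdvdq : p ^ L ∣ q := by
    apply Finset.dvd_lcm (f := id) (b := p ^ L)
    simp only [Finset.mem_Icc]
    refine ⟨Nat.one_le_pow _ _ hp.pos, ?_⟩
    rw [hL]
    exact Nat.pow_log_le_self p (by omega)
  have hqnorm : padicNorm p ((q:ℚ)) ≤ (p:ℚ) ^ (-(L:ℤ)) := by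
    have h2 := (padicNorm.dvd_iff_norm_le (p := p) (n := L) (z := (q:ℤ))).1
      (by exact_mod_cast hdvdq)
    simpa using h2
  have hqn0 : (0:ℚ) < padicNorm p ((q:ℚ)) := by
    have : padicNorm p ((q:ℚ)) ≠ 0 := padicNorm.nonzero (by exact_mod_cast hq0)
    have h3 := padicNorm.nonneg (p := p) ((q:ℚ))
    exact lt_of_le_of_ne h3 (Ne.symm this)
  have hbig : (p:ℚ) ^ (L:ℤ) ≤ padicNorm p (1 / (q:ℚ)) := by
    rw [padicNorm.div, padicNorm.one]
    calc (p:ℚ) ^ (L:ℤ) = 1 / (p:ℚ) ^ (-(L:ℤ)) := by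
          rw [zpow_neg, one_div, inv_inv]
      _ ≤ 1 / padicNorm p ((q:ℚ)) := one_div_le_one_div_of_le hqn0 hqnorm
  have hlt : (p:ℚ) ^ ((L:ℤ) - 1) < (p:ℚ) ^ (L:ℤ) :=
    zpow_lt_zpow_right₀ (by exact_mod_cast hp.one_lt) (by omega)
  linarith
end

section
/- Let N be a positive integer, p a prime with p ≤ N, M = ⌊N/6⌋, and v = ⌊log N / log p⌋. Write 2M = ∑_{i=0}^v a_i p^i and 3M = ∑_{i=0}^v b_i p^i in base p. Let i₁ be minimal with 0 ≤ i₁ ≤ v such that a_i + b_i ≥ p - 1 for all i₁ ≤ i < v, and set n_p = ∑_{i=0}^{i₁-1} (p - 1 - a_i - b_i) p^i. Then p^v divides (5M + n_p + 1) · binomial(5M + n_p, 2M). -/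
open Finset

lemma geom_nat {p : ℕ} (hp : 1 ≤ p) (k : ℕ) :
    ∑ i ∈ range k, (p - 1) * p ^ i = p ^ k - 1 := by
  induction k with
  | zero => simp
  | succ k ih =>
    rw [Finset.sum_range_succ, ih]
    have h1 : 1 ≤ p ^ k := Nat.one_le_pow _ _ hp
    have h2 : p ^ (k + 1) = p * p ^ k := by ring
    have h3 : (p - 1) * p ^ k = p * p ^ k - p ^ k := by
      rw [Nat.sub_mul, one_mul]
    have h4 : p ^ k ≤ p * p ^ k := Nat.le_mul_of_pos_left _ hp
    rw [h2, h3]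
    omega

lemma digit_sum_lt {p : ℕ} (hp : 1 ≤ p) {c : ℕ → ℕ} (k : ℕ) (hc : ∀ i, i < k → c i < p) :
    ∑ i ∈ range k, c i * p ^ i < p ^ k := by
  have h1 : ∑ i ∈ range k, c i * p ^ i ≤ ∑ i ∈ range k, (p - 1) * p ^ i := by
    apply Finset.sum_le_sum
    intro i hi
    have := hc i (Finset.mem_range.mp hi)
    exact Nat.mul_le_mul_right _ (by omega)
  have := geom_nat hp k
  have h2 : 1 ≤ p ^ k := Nat.one_le_pow _ _ hp
  omega

lemma digit_mod {p : ℕ} (hp : 1 ≤ p) {c : ℕ → ℕ} (hc : ∀ i, c i < p) {t k : ℕ} (hk : k ≤ t) :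
    (∑ i ∈ range t, c i * p ^ i) % p ^ k = ∑ i ∈ range k, c i * p ^ i := by
  rw [← Finset.sum_range_add_sum_Ico _ hk]
  have hdvd : p ^ k ∣ ∑ i ∈ Finset.Ico k t, c i * p ^ i := by
    apply Finset.dvd_sum
    intro i hi
    exact Dvd.dvd.mul_left (pow_dvd_pow p (Finset.mem_Ico.mp hi).1) _
  obtain ⟨e, he⟩ := hdvd
  rw [he, Nat.add_mul_mod_self_left]
  exact Nat.mod_eq_of_lt (digit_sum_lt hp k (fun i _ => hc i))

theorem stmt_13 (N p : ℕ) (hN : 0 < N) (hp : p.Prime) (hpN : p ≤ N)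
    (M v : ℕ) (hM : M = N / 6) (hv : v = Nat.log p N)
    (a b : ℕ → ℕ) (ha : ∀ i, a i < p) (hb : ∀ i, b i < p)
    (h2M : 2 * M = ∑ i ∈ Finset.range (v + 1), a i * p ^ i)
    (h3M : 3 * M = ∑ i ∈ Finset.range (v + 1), b i * p ^ i)
    (i₁ : ℕ) (hi₁v : i₁ ≤ v)
    (hi₁ : ∀ i, i₁ ≤ i → i < v → p - 1 ≤ a i + b i)
    (hmin : ∀ j, j < i₁ → ¬ (∀ i, j ≤ i → i < v → p - 1 ≤ a i + b i))
    (np : ℕ)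
    (hnp : (np : ℤ) = ∑ i ∈ Finset.range i₁, ((p : ℤ) - 1 - a i - b i) * (p : ℤ) ^ i) :
    p ^ v ∣ (5 * M + np + 1) * Nat.choose (5 * M + np) (2 * M) := by
  have hp2 : 2 ≤ p := hp.two_le
  have hp1 : 1 ≤ p := by omega
  -- digits of 3M + np
  set d : ℕ → ℕ := fun i => if i < i₁ then p - 1 - a i else b i with hd_def
  have hd : ∀ i, d i < p := by
    intro i
    simp only [hd_def]
    split
    · omega
    · exact hb i
  have hm : 3 * M + np = ∑ i ∈ Finset.range (v + 1), d i * p ^ i := by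
    have hZ : ((3 * M + np : ℕ) : ℤ) = ((∑ i ∈ Finset.range (v + 1), d i * p ^ i : ℕ) : ℤ) := by
      push_cast
      rw [show ((3:ℤ) * M) = ((3 * M : ℕ) : ℤ) by push_cast; ring, hnp]
      rw [h3M]
      push_cast
      rw [← Finset.sum_range_add_sum_Ico (fun i => (b i : ℤ) * (p : ℤ) ^ i)
        (show i₁ ≤ v + 1 by omega)]
      rw [← Finset.sum_range_add_sum_Ico (fun i => (d i : ℤ) * (p : ℤ) ^ i)
        (show i₁ ≤ v + 1 by omega)]
      have h1 : ∑ i ∈ Finset.Ico i₁ (v + 1), (d i : ℤ) * (p : ℤ) ^ i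
          = ∑ i ∈ Finset.Ico i₁ (v + 1), (b i : ℤ) * (p : ℤ) ^ i := by
        apply Finset.sum_congr rfl
        intro i hi
        have : ¬ i < i₁ := by have := (Finset.mem_Ico.mp hi).1; omega
        simp [hd_def, this]
      have h2 : ∑ i ∈ Finset.range i₁, (d i : ℤ) * (p : ℤ) ^ i
          = ∑ i ∈ Finset.range i₁, (b i : ℤ) * (p : ℤ) ^ i
            + ∑ i ∈ Finset.range i₁, ((p : ℤ) - 1 - a i - b i) * (p : ℤ) ^ i := by
        rw [← Finset.sum_add_distrib]
        apply Finset.sum_congr rfl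
        intro i hi
        have hii : i < i₁ := Finset.mem_range.mp hi
        have h1 := ha i
        have : ((d i : ℤ)) = (b i : ℤ) + ((p : ℤ) - 1 - a i - b i) := by
          simp only [hd_def, if_pos hii]
          omega
        rw [this]; ring
      rw [h1, h2]; ring
    exact_mod_cast hZ
  -- define j : first index ≥ i₁ which is v or has a carry
  have hPj : ∃ i, i₁ ≤ i ∧ (i = v ∨ p ≤ a i + b i) := ⟨v, hi₁v, Or.inl rfl⟩
  set j := Nat.find hPj with hj_def
  have hj_spec := Nat.find_spec hPj
  have hji₁ : i₁ ≤ j := hj_spec.1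
  have hjv : j ≤ v := by
    by_contra h
    exact Nat.find_min hPj (show v < j by omega) ⟨hi₁v, Or.inl rfl⟩
  have hjlt : ∀ i, i₁ ≤ i → i < j → a i + b i = p - 1 := by
    intro i h1 h2
    have hnP := Nat.find_min hPj h2
    have hiv : i < v := lt_of_lt_of_le h2 hjv
    have hge := hi₁ i h1 hiv
    by_contra hne
    exact hnP ⟨h1, by omega⟩
  have hjcarry : j < v → p ≤ a j + b j := by
    intro h
    rcases hj_spec.2 with h' | h'
    · omega
    · exact h'
  -- key digit-sum computation
  have hsum : ∀ i, i₁ ≤ i → i ≤ v →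
      2 * M % p ^ i + (3 * M + np) % p ^ i
        = (p ^ i₁ - 1) + ∑ l ∈ Finset.Ico i₁ i, (a l + b l) * p ^ l := by
    intro i h1 h2
    rw [h2M, hm, digit_mod hp1 ha (show i ≤ v + 1 by omega),
      digit_mod hp1 hd (show i ≤ v + 1 by omega), ← Finset.sum_add_distrib]
    have hterm : ∀ l, a l * p ^ l + d l * p ^ l = (a l + d l) * p ^ l := by
      intro l; ring
    simp only [hterm]
    rw [← Finset.sum_range_add_sum_Ico (fun l => (a l + d l) * p ^ l) h1]
    congr 1
    · have : ∀ l ∈ Finset.range i₁, (a l + d l) * p ^ l = (p - 1) * p ^ l := by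
        intro l hl
        have hll : l < i₁ := Finset.mem_range.mp hl
        have := ha l
        simp only [hd_def, if_pos hll]
        congr 1
        omega
      rw [Finset.sum_congr rfl this, geom_nat hp1]
    · apply Finset.sum_congr rfl
      intro l hl
      have : ¬ l < i₁ := by have := (Finset.mem_Ico.mp hl).1; omega
      simp [hd_def, this]
  have hpowj : 1 ≤ p ^ j := Nat.one_le_pow _ _ hp1
  have hpowi₁ : 1 ≤ p ^ i₁ := Nat.one_le_pow _ _ hp1
  have hpowle : p ^ i₁ ≤ p ^ j := Nat.pow_le_pow_right hp1 hji₁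
  -- Claim A : p ^ j ∣ 5M + np + 1
  have hA : 2 * M % p ^ j + (3 * M + np) % p ^ j = p ^ j - 1 := by
    rw [hsum j hji₁ hjv]
    have hIco : ∑ l ∈ Finset.Ico i₁ j, (a l + b l) * p ^ l
        = ∑ l ∈ Finset.Ico i₁ j, (p - 1) * p ^ l := by
      apply Finset.sum_congr rfl
      intro l hl
      rw [hjlt l (Finset.mem_Ico.mp hl).1 (Finset.mem_Ico.mp hl).2]
    have hIco2 : ∑ l ∈ Finset.range i₁, (p - 1) * p ^ l
        + ∑ l ∈ Finset.Ico i₁ j, (p - 1) * p ^ l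
        = ∑ l ∈ Finset.range j, (p - 1) * p ^ l :=
      Finset.sum_range_add_sum_Ico _ hji₁
    rw [geom_nat hp1, geom_nat hp1] at hIco2
    rw [hIco]
    omega
  have hdvd1 : p ^ j ∣ 5 * M + np + 1 := by
    have h5 : (5 * M + np) % p ^ j = p ^ j - 1 := by
      have he : 5 * M + np = 2 * M + (3 * M + np) := by ring
      rw [he, Nat.add_mod, hA]
      exact Nat.mod_eq_of_lt (by omega)
    have hq := Nat.div_add_mod (5 * M + np) (p ^ j)
    refine ⟨(5 * M + np) / p ^ j + 1, ?_⟩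
    rw [Nat.mul_add, Nat.mul_one]
    omega
  -- Claim B : p ^ (v - j) ∣ choose
  have hklen : 2 * M ≤ 5 * M + np := by omega
  have hB : ∀ i, j < i → i ≤ v → p ^ i ≤ 2 * M % p ^ i + (3 * M + np) % p ^ i := by
    intro i hji hiv
    rw [hsum i (by omega) hiv]
    have hjmem : j ∈ Finset.Ico i₁ i := Finset.mem_Ico.mpr ⟨hji₁, hji⟩
    have hbound : ∑ l ∈ Finset.Ico i₁ i, ((p - 1) * p ^ l + (if l = j then p ^ l else 0))
        ≤ ∑ l ∈ Finset.Ico i₁ i, (a l + b l) * p ^ l := by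
      apply Finset.sum_le_sum
      intro l hl
      obtain ⟨hl1, hl2⟩ := Finset.mem_Ico.mp hl
      by_cases hlj : l = j
      · have hcar : p ≤ a l + b l := by rw [hlj]; exact hjcarry (by omega)
        simp only [if_pos hlj]
        calc (p - 1) * p ^ l + p ^ l = ((p - 1) + 1) * p ^ l := by ring
          _ ≤ (a l + b l) * p ^ l := Nat.mul_le_mul_right _ (by omega)
      · have hge : p - 1 ≤ a l + b l := hi₁ l hl1 (by omega)
        simp only [if_neg hlj, add_zero]
        exact Nat.mul_le_mul_right _ hge
    rw [Finset.sum_add_distrib] at hbound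
    have hIco2 : ∑ l ∈ Finset.range i₁, (p - 1) * p ^ l
        + ∑ l ∈ Finset.Ico i₁ i, (p - 1) * p ^ l
        = ∑ l ∈ Finset.range i, (p - 1) * p ^ l :=
      Finset.sum_range_add_sum_Ico _ (show i₁ ≤ i by omega)
    rw [geom_nat hp1, geom_nat hp1] at hIco2
    have hsingle : ∑ l ∈ Finset.Ico i₁ i, (if l = j then p ^ l else 0) = p ^ j := by
      rw [Finset.sum_eq_single_of_mem j hjmem (fun l _ hne => if_neg hne), if_pos rfl]
    rw [hsingle] at hbound
    have hpi : 1 ≤ p ^ i := Nat.one_le_pow _ _ hp1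
    have hji' : p ^ j ≤ p ^ i := Nat.pow_le_pow_right hp1 (by omega)
    have hi₁i : p ^ i₁ ≤ p ^ i := Nat.pow_le_pow_right hp1 (by omega)
    omega
  have hchoose : p ^ (v - j) ∣ Nat.choose (5 * M + np) (2 * M) := by
    rcases eq_or_lt_of_le hjv with heq | hlt
    · rw [← heq]
      simp
    · have hge : p ^ v ≤ 5 * M + np := by
        have h1 := hB v hlt le_rfl
        have h2 : 2 * M % p ^ v ≤ 2 * M := Nat.mod_le _ _
        have h3 : (3 * M + np) % p ^ v ≤ 3 * M + np := Nat.mod_le _ _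
        omega
      have hne : 5 * M + np ≠ 0 := by
        have := Nat.one_le_pow v p (show 0 < p by omega)
        omega
      have hlog : v ≤ Nat.log p (5 * M + np) := (Nat.le_log_iff_pow_le hp.one_lt hne).mpr hge
      have hmult := Nat.Prime.emultiplicity_choose (n := 5 * M + np) (k := 2 * M)
        (b := Nat.log p (5 * M + np) + 1) hp hklen (Nat.lt_succ_self _)
      apply pow_dvd_of_le_emultiplicity
      rw [hmult]
      have hsub : Finset.Ico (j + 1) (v + 1) ⊆ (Finset.Ico 1 (Nat.log p (5 * M + np) + 1)).filter
          (fun i => p ^ i ≤ 2 * M % p ^ i + (5 * M + np - 2 * M) % p ^ i) := by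
        intro i hi
        obtain ⟨h1, h2⟩ := Finset.mem_Ico.mp hi
        rw [Finset.mem_filter, Finset.mem_Ico]
        refine ⟨⟨by omega, by omega⟩, ?_⟩
        have hrw : 5 * M + np - 2 * M = 3 * M + np := by omega
        rw [hrw]
        exact hB i (by omega) (by omega)
      have hcard : v - j ≤ ((Finset.Ico 1 (Nat.log p (5 * M + np) + 1)).filter
          (fun i => p ^ i ≤ 2 * M % p ^ i + (5 * M + np - 2 * M) % p ^ i)).card := by
        calc v - j = (Finset.Ico (j + 1) (v + 1)).card := by rw [Nat.card_Ico]; omega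
          _ ≤ _ := Finset.card_le_card hsub
      exact_mod_cast Nat.cast_le.mpr hcard
  rw [show v = j + (v - j) by omega, pow_add]
  exact mul_dvd_mul hdvd1 hchoose
end

section
/- Let N be a positive integer, p a prime with p ≤ N, M = ⌊N/6⌋, and v = ⌊log N / log p⌋. Write 2M = ∑_{i=0}^v a_i p^i and 3M = ∑_{i=0}^v b_i p^i in base p. Let i₁ be minimal with 0 ≤ i₁ ≤ v such that a_i + b_i ≥ p - 1 for all i₁ ≤ i < v, and set n_p = ∑_{i=0}^{i₁-1} (p - 1 - a_i - b_i) p^i. Then 5M + n_p + 1 ≤ N. -/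
open Finset

private lemma sum_split_aux (a : ℕ → ℕ) (p k m : ℕ) :
    ∑ i ∈ Finset.range (k + m), a i * p ^ i
      = (∑ i ∈ Finset.range k, a i * p ^ i)
        + p ^ k * ∑ i ∈ Finset.range m, a (k + i) * p ^ i := by
  rw [Finset.sum_range_add, Finset.mul_sum]
  congr 1
  refine Finset.sum_congr rfl (fun i _ => ?_)
  rw [pow_add]; ring

private lemma digit_sum_lt_s14 (p : ℕ) (a : ℕ → ℕ) (ha : ∀ i, a i < p) (k : ℕ) :
    (∑ i ∈ Finset.range k, a i * p ^ i) + 1 ≤ p ^ k := by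
  induction k with
  | zero => simp
  | succ k ih =>
      rw [Finset.sum_range_succ, pow_succ]
      have h2 : (a k + 1) * p ^ k ≤ p ^ k * p := by
        rw [mul_comm (p ^ k) p]
        exact Nat.mul_le_mul_right _ (ha k)
      nlinarith [ih]

theorem stmt_14 (N p : ℕ) (hN : 0 < N) (hp : p.Prime) (hpN : p ≤ N)
    (M v : ℕ) (hM : M = N / 6) (hv : v = Nat.log p N)
    (a b : ℕ → ℕ) (ha : ∀ i, a i < p) (hb : ∀ i, b i < p)
    (h2M : 2 * M = ∑ i ∈ Finset.range (v + 1), a i * p ^ i)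
    (h3M : 3 * M = ∑ i ∈ Finset.range (v + 1), b i * p ^ i)
    (i₁ : ℕ) (hi₁v : i₁ ≤ v)
    (hi₁ : ∀ i, i₁ ≤ i → i < v → p - 1 ≤ a i + b i)
    (hmin : ∀ j, j < i₁ → ¬ (∀ i, j ≤ i → i < v → p - 1 ≤ a i + b i))
    (np : ℕ)
    (hnp : (np : ℤ) = ∑ i ∈ Finset.range i₁, ((p : ℤ) - 1 - a i - b i) * (p : ℤ) ^ i) :
    5 * M + np + 1 ≤ N := by
  have hp2 : 2 ≤ p := hp.two_le
  have h6 : 6 * M ≤ N := by omega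
  set A := ∑ i ∈ Finset.range i₁, a i * p ^ i with hA_def
  set B := ∑ i ∈ Finset.range i₁, b i * p ^ i with hB_def
  set HA := ∑ i ∈ Finset.range (v + 1 - i₁), a (i₁ + i) * p ^ i with hHA_def
  set HB := ∑ i ∈ Finset.range (v + 1 - i₁), b (i₁ + i) * p ^ i with hHB_def
  -- split the digit sums
  have e : v + 1 = i₁ + (v + 1 - i₁) := by omega
  have h2M' : 2 * M = A + p ^ i₁ * HA := by
    rw [h2M, e, sum_split_aux]
  have h3M' : 3 * M = B + p ^ i₁ * HB := by
    rw [h3M, e, sum_split_aux]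
  -- key identity for np
  have hgeo : ∑ i ∈ Finset.range i₁, ((p : ℤ) - 1) * (p : ℤ) ^ i = (p : ℤ) ^ i₁ - 1 := by
    rw [← Finset.mul_sum, mul_comm, geom_sum_mul]
  have hsum : (np : ℤ) = (p : ℤ) ^ i₁ - 1 - A - B := by
    rw [hnp, ← hgeo, hA_def, hB_def]
    push_cast
    rw [← Finset.sum_sub_distrib, ← Finset.sum_sub_distrib]
    exact Finset.sum_congr rfl (fun i _ => by ring)
  have hkey : np + A + B + 1 = p ^ i₁ := by
    have hc : ((np + A + B + 1 : ℕ) : ℤ) = ((p ^ i₁ : ℕ) : ℤ) := by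
      push_cast
      linarith [hsum]
    exact_mod_cast hc
  have hAlt : A + 1 ≤ p ^ i₁ := digit_sum_lt_s14 p a ha i₁
  have hBlt : B + 1 ≤ p ^ i₁ := digit_sum_lt_s14 p b hb i₁
  by_cases hcase : i₁ = v
  · -- top case : i₁ = v
    subst hcase
    have hq : p ^ i₁ ≤ N := by
      rw [hv]
      exact Nat.pow_log_le_self p hN.ne'
    have hqpos : 0 < p ^ i₁ := Nat.pow_pos (by omega)
    have hHAv : HA = a i₁ := by
      rw [hHA_def, show i₁ + 1 - i₁ = 1 from by omega]
      simp
    have hHBv : HB = b i₁ := by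
      rw [hHB_def, show i₁ + 1 - i₁ = 1 from by omega]
      simp
    rw [hHAv] at h2M'
    rw [hHBv] at h3M'
    by_cases hMq : p ^ i₁ ≤ M
    · omega
    · have hx : a i₁ < 2 := by
        by_contra h
        push_neg at h
        have : p ^ i₁ * 2 ≤ p ^ i₁ * a i₁ := Nat.mul_le_mul_left _ h
        omega
      have hy : b i₁ < 3 := by
        by_contra h
        push_neg at h
        have : p ^ i₁ * 3 ≤ p ^ i₁ * b i₁ := Nat.mul_le_mul_left _ h
        omega
      interval_cases h1 : a i₁ <;> interval_cases h2 : b i₁ <;> omega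
  · -- case i₁ < v
    have hilt : i₁ < v := lt_of_le_of_ne hi₁v hcase
    have hPMt : p ^ i₁ ≤ M + A + B := by
      by_cases hi0 : i₁ = 0
      · subst hi0
        have hA0 : A = 0 := by rw [hA_def]; simp
        have hB0 : B = 0 := by rw [hB_def]; simp
        -- need 1 ≤ M
        rcases Nat.eq_zero_or_pos M with hM0 | hMpos
        · exfalso
          have hmem : (0 : ℕ) ∈ Finset.range (v + 1) := Finset.mem_range.2 (Nat.succ_pos v)
          have ha0 : a 0 ≤ 2 * M := by
            calc a 0 = a 0 * p ^ 0 := by simp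
              _ ≤ ∑ i ∈ Finset.range (v + 1), a i * p ^ i :=
                  Finset.single_le_sum (f := fun i => a i * p ^ i) (fun i _ => Nat.zero_le _) hmem
              _ = 2 * M := h2M.symm
          have hb0 : b 0 ≤ 3 * M := by
            calc b 0 = b 0 * p ^ 0 := by simp
              _ ≤ ∑ i ∈ Finset.range (v + 1), b i * p ^ i :=
                  Finset.single_le_sum (f := fun i => b i * p ^ i) (fun i _ => Nat.zero_le _) hmem
              _ = 3 * M := h3M.symm
          have h01 := hi₁ 0 le_rfl hilt
          omega
        · simpa [hA0, hB0] using (show 1 ≤ M by omega)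
      · by_cases hPM : p ^ i₁ ≤ M
        · omega
        · push_neg at hPM
          have E : A + p ^ i₁ * HA + M = B + p ^ i₁ * HB := by omega
          rcases lt_trichotomy HA HB with h | h | h
          · have : p ^ i₁ * (HA + 1) ≤ p ^ i₁ * HB := Nat.mul_le_mul_left _ (by omega)
            rw [Nat.mul_add, Nat.mul_one] at this
            omega
          · -- HA = HB : extract leading digits
            have hAeq : HA = a i₁ + p * ∑ i ∈ Finset.range (v - i₁), a (i₁ + (i + 1)) * p ^ i := by
              rw [hHA_def, show v + 1 - i₁ = (v - i₁) + 1 from by omega,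
                Finset.sum_range_succ']
              simp [Finset.mul_sum]
              rw [add_comm]
              congr 1
              refine Finset.sum_congr rfl (fun i _ => ?_)
              rw [pow_succ]; ring
            have hBeq : HB = b i₁ + p * ∑ i ∈ Finset.range (v - i₁), b (i₁ + (i + 1)) * p ^ i := by
              rw [hHB_def, show v + 1 - i₁ = (v - i₁) + 1 from by omega,
                Finset.sum_range_succ']
              simp [Finset.mul_sum]
              rw [add_comm]
              congr 1
              refine Finset.sum_congr rfl (fun i _ => ?_)
              rw [pow_succ]; ring
            have hamod : HA % p = a i₁ := by
              rw [hAeq, Nat.add_mul_mod_self_left, Nat.mod_eq_of_lt (ha i₁)]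
            have hbmod : HB % p = b i₁ := by
              rw [hBeq, Nat.add_mul_mod_self_left, Nat.mod_eq_of_lt (hb i₁)]
            have hab : a i₁ = b i₁ := by rw [← hamod, ← hbmod, h]
            have hd := hi₁ i₁ le_rfl hilt
            have ha1 : 1 ≤ a i₁ := by omega
            have hHA1 : 1 ≤ HA := by omega
            have hE2 : A + M = B := by
              rw [h] at E
              omega
            have hmul : p ^ i₁ * 1 ≤ p ^ i₁ * HA := Nat.mul_le_mul_left _ hHA1
            rw [Nat.mul_one] at hmul
            omega
          · have : p ^ i₁ * (HB + 1) ≤ p ^ i₁ * HA := Nat.mul_le_mul_left _ (by omega)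
            rw [Nat.mul_add, Nat.mul_one] at this
            omega
    omega
end

section
/- For every positive integer N, there exists an integer polynomial P of degree less than N with ∫₀¹ P(x)dx = 1/lcm{1,...,N} such that (x(1-x))^⌊N/3⌋ divides P(x) in ℤ[x]. -/
open intervalIntegral in
lemma beta_int : ∀ (b a : ℕ), ∫ x in (0:ℝ)..1, x^a * (1-x)^b
    = 1/(((a+b+1) * Nat.choose (a+b) a : ℕ) : ℝ) := by
  intro b
  induction b with
  | zero =>
    intro a
    simp [integral_pow]
  | succ b ih =>
    intro a
    have key : ∫ x in (0:ℝ)..1,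
        ((a+1:ℝ) * (x^a * (1-x)^(b+1)) - (b+1:ℝ) * (x^(a+1) * (1-x)^b)) = 0 := by
      have hd : ∀ x ∈ Set.uIcc (0:ℝ) 1,
          HasDerivAt (fun x : ℝ => x^(a+1) * (1-x)^(b+1))
            ((a+1:ℝ) * (x^a * (1-x)^(b+1)) - (b+1:ℝ) * (x^(a+1) * (1-x)^b)) x := by
        intro x _
        have h1 : HasDerivAt (fun x : ℝ => x^(a+1)) ((a+1:ℝ) * x^a) x := by
          simpa using hasDerivAt_pow (a+1) x
        have h2 : HasDerivAt (fun x : ℝ => (1-x)^(b+1)) (-((b+1:ℝ) * (1-x)^b)) x := by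
          have h3 : HasDerivAt (fun x : ℝ => 1 - x) (-1) x := by
            simpa using (hasDerivAt_id x).const_sub 1
          have := h3.fun_pow (b+1)
          simpa [mul_comm] using this
        have := h1.fun_mul h2
        refine this.congr_deriv ?_
        push_cast
        ring
      have hint : IntervalIntegrable (fun x : ℝ =>
          (a+1:ℝ) * (x^a * (1-x)^(b+1)) - (b+1:ℝ) * (x^(a+1) * (1-x)^b)) MeasureTheory.volume 0 1 := by
        apply Continuous.intervalIntegrable
        fun_prop
      rw [integral_eq_sub_of_hasDerivAt hd hint]
      simp
    have i1 : IntervalIntegrable (fun x : ℝ => (a+1:ℝ) * (x^a * (1-x)^(b+1)))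
        MeasureTheory.volume 0 1 := by apply Continuous.intervalIntegrable; fun_prop
    have i2 : IntervalIntegrable (fun x : ℝ => (b+1:ℝ) * (x^(a+1) * (1-x)^b))
        MeasureTheory.volume 0 1 := by apply Continuous.intervalIntegrable; fun_prop
    rw [integral_sub i1 i2, integral_const_mul, integral_const_mul, sub_eq_zero] at key
    have hI : (∫ x in (0:ℝ)..1, x^a * (1-x)^(b+1))
        = (b+1:ℝ)/(a+1:ℝ) * ∫ x in (0:ℝ)..1, x^(a+1) * (1-x)^b := by
      field_simp at key ⊢
      linarith [key]
    rw [hI, ih (a+1)]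
    have hch : (Nat.choose (a+b+1) (a+1)) * (a+1) = (Nat.choose (a+b+1) a) * (b+1) := by
      have h := Nat.choose_succ_right_eq (a+b+1) a
      have hsub : a+b+1-a = b+1 := by omega
      rw [hsub] at h
      exact h
    have e1 : a+1+b = a+b+1 := by ring
    have e2 : a+(b+1) = a+b+1 := by ring
    rw [e1, e2]
    have h1 : 0 < (a+b+1).choose (a+1) := Nat.choose_pos (by omega)
    have h2 : 0 < (a+b+1).choose a := Nat.choose_pos (by omega)
    have hchR : (((a+b+1).choose (a+1) : ℝ)) * (a+1) = (((a+b+1).choose a : ℝ)) * (b+1) := by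
      exact_mod_cast hch
    have h1R : (((a+b+1).choose (a+1) : ℝ)) ≠ 0 := by positivity
    have h2R : (((a+b+1).choose a : ℝ)) ≠ 0 := by positivity
    have ha : (a:ℝ)+1 ≠ 0 := by positivity
    have hs : (a:ℝ)+b+1+1 ≠ 0 := by positivity
    field_simp
    ring_nf
    ring_nf at hchR
    push_cast
    linear_combination (-(2 + (a:ℝ) + b)) * hchR

lemma lcm_bezout {α : Type*} [DecidableEq α] (s : Finset α) (hs : s.Nonempty) (d : α → ℕ)
    (hd : ∀ i ∈ s, 0 < d i) :
    ∃ c : α → ℤ, ∑ i ∈ s, (c i : ℝ)/(d i : ℝ) = 1/((s.lcm d : ℕ) : ℝ) := by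
  induction hs using Finset.Nonempty.cons_induction with
  | singleton a =>
    refine ⟨fun _ => 1, ?_⟩
    simp [Finset.lcm_singleton]
  | cons a s ha hs ih =>
    have hda : 0 < d a := hd a (Finset.mem_cons_self a s)
    have hds : ∀ i ∈ s, 0 < d i := fun i hi => hd i (Finset.mem_cons.2 (Or.inr hi))
    obtain ⟨c', hc'⟩ := ih hds
    have hG : 0 < s.lcm d := by
      rcases Nat.eq_zero_or_pos (s.lcm d) with h | h
      · exfalso
        rw [Finset.lcm_eq_zero_iff] at h
        obtain ⟨i, hi, h0⟩ := h
        have := hds i hi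
        omega
      · exact h
    set G := s.lcm d with hGdef
    set g := Nat.gcd (d a) G with hgdef
    have hbez : (g : ℤ) = (d a) * Nat.gcdA (d a) G + G * Nat.gcdB (d a) G :=
      Nat.gcd_eq_gcd_ab (d a) G
    set u := Nat.gcdA (d a) G
    set v := Nat.gcdB (d a) G
    refine ⟨fun i => if i = a then v else u * c' i, ?_⟩
    rw [Finset.sum_cons]
    have hsum : ∑ i ∈ s, ((if i = a then (v:ℤ) else u * c' i : ℤ) : ℝ) / d i
        = (u:ℝ) * ∑ i ∈ s, (c' i : ℝ) / d i := by
      rw [Finset.mul_sum]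
      apply Finset.sum_congr rfl
      intro i hi
      have : i ≠ a := fun h => ha (h ▸ hi)
      simp [this]
      ring
    rw [hsum, hc']
    have hlcm : (Finset.cons a s ha).lcm d = Nat.lcm (d a) G := by
      rw [Finset.cons_eq_insert, Finset.lcm_insert]
      rfl
    rw [hlcm]
    have hml : Nat.gcd (d a) G * Nat.lcm (d a) G = d a * G := Nat.gcd_mul_lcm (d a) G
    have hlpos : 0 < Nat.lcm (d a) G := Nat.pos_of_ne_zero (by
      intro h
      have := Nat.lcm_pos hda hG
      omega)
    have h1 : (d a : ℝ) ≠ 0 := by positivity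
    have h2 : (G : ℝ) ≠ 0 := by exact_mod_cast hG.ne'
    have h3 : ((Nat.lcm (d a) G : ℕ) : ℝ) ≠ 0 := by exact_mod_cast hlpos.ne'
    have hmlR : (g : ℝ) * (Nat.lcm (d a) G : ℝ) = (d a : ℝ) * G := by exact_mod_cast hml
    have hbezR : (g : ℝ) = (d a : ℝ) * (u : ℝ) + (G : ℝ) * (v : ℝ) := by exact_mod_cast hbez
    simp only [if_pos rfl]
    field_simp
    rw [if_pos trivial, ← hmlR, hbezR]
    ring

lemma exists_ab (N q : ℕ) (hq1 : 1 ≤ q) (hqN : q ≤ N) :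
    ∃ a b : ℕ, N/3 ≤ a ∧ N/3 ≤ b ∧ a + b + 1 ≤ N ∧ q ∣ (a+b+1) * Nat.choose (a+b) a := by
  set m := N/3 with hm
  have h3m : 3*m ≤ N := by
    have := Nat.div_mul_le_self N 3
    omega
  by_cases h1 : 2*m + 1 ≤ q
  · refine ⟨m, q-1-m, le_refl m, by omega, by omega, ?_⟩
    have he : m + (q-1-m) + 1 = q := by omega
    rw [he]
    exact Dvd.dvd.mul_right dvd_rfl _
  · by_cases h2 : m + 1 ≤ q
    · -- m+1 ≤ q ≤ 2m : a = q-1, b = m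
      refine ⟨q-1, m, by omega, le_refl m, by omega, ?_⟩
      have key := Nat.add_one_mul_choose_eq (q-1+m) (q-1)
      have he2 : q-1+1 = q := by omega
      rw [he2] at key
      rw [key]
      exact dvd_mul_left q _
    · -- q ≤ m : s+1 = (N/q)*q
      have hmod := Nat.div_add_mod N q
      have hlt := Nat.mod_lt N (show 0 < q by omega)
      set s1 := (N/q)*q with hs1
      have hs1N : s1 ≤ N := Nat.div_mul_le_self N q
      have hcomm : (N/q)*q = q*(N/q) := Nat.mul_comm _ _
      have hs1ge : N - q + 1 ≤ s1 := by omega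
      have hs1big : 2*m + 1 ≤ s1 := by omega
      refine ⟨m, s1 - 1 - m, le_refl m, by omega, by omega, ?_⟩
      have he : m + (s1 - 1 - m) + 1 = s1 := by omega
      rw [he]
      exact (dvd_mul_left q (N/q)).mul_right _

open Polynomial in
theorem stmt_16 (N : ℕ) (hN : 0 < N) :
    ∃ P : Polynomial ℤ, P.degree < N ∧
      (∫ x in (0:ℝ)..1, Polynomial.aeval x P) = 1 / (((Finset.Icc 1 N).lcm id : ℕ) : ℝ) ∧
      (Polynomial.X * (1 - Polynomial.X)) ^ (N / 3) ∣ P := by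
  set m := N/3 with hm
  have key : ∀ q : ℕ, ∃ ab : ℕ × ℕ, q ∈ Finset.Icc 1 N →
      m ≤ ab.1 ∧ m ≤ ab.2 ∧ ab.1 + ab.2 + 1 ≤ N ∧
      q ∣ (ab.1 + ab.2 + 1) * Nat.choose (ab.1 + ab.2) ab.1 := by
    intro q
    by_cases h : q ∈ Finset.Icc 1 N
    · rw [Finset.mem_Icc] at h
      obtain ⟨a, b, h1, h2, h3, h4⟩ := exists_ab N q h.1 h.2
      exact ⟨(a, b), fun _ => ⟨h1, h2, h3, h4⟩⟩
    · exact ⟨(0, 0), fun h' => absurd h' h⟩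
  choose ab hab using key
  set A : ℕ → ℕ := fun q => (ab q).1 with hA
  set B : ℕ → ℕ := fun q => (ab q).2 with hB
  set d : ℕ → ℕ := fun q => (A q + B q + 1) * Nat.choose (A q + B q) (A q) with hd
  have hdpos : ∀ q ∈ Finset.Icc 1 N, 0 < d q := by
    intro q hq
    exact Nat.mul_pos (by omega) (Nat.choose_pos (by omega))
  set L : ℕ := (Finset.Icc 1 N).lcm id with hL
  set D : ℕ := (Finset.Icc 1 N).lcm d with hD
  have hne : (Finset.Icc 1 N).Nonempty := ⟨1, by simp [Finset.mem_Icc]; omega⟩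
  have hLpos : 0 < L := by
    rcases Nat.eq_zero_or_pos L with h | h
    · rw [hL, Finset.lcm_eq_zero_iff] at h
      simp only [Set.mem_image, id] at h
      obtain ⟨i, hi, h0⟩ := h
      rw [Finset.mem_Icc] at hi
      omega
    · exact h
  have hDpos : 0 < D := by
    rcases Nat.eq_zero_or_pos D with h | h
    · rw [hD, Finset.lcm_eq_zero_iff] at h
      obtain ⟨i, hi, h0⟩ := h
      have := hdpos i hi
      omega
    · exact h
  have hLD : L ∣ D := by
    rw [hL]
    apply Finset.lcm_dvd
    intro q hq
    have h1 : q ∣ d q := (hab q hq).2.2.2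
    exact dvd_trans h1 (Finset.dvd_lcm hq)
  obtain ⟨c, hc⟩ := lcm_bezout (Finset.Icc 1 N) hne d hdpos
  set k : ℕ := D / L with hk
  have hkL : k * L = D := Nat.div_mul_cancel hLD
  set P : Polynomial ℤ :=
    ∑ q ∈ Finset.Icc 1 N, Polynomial.C ((k : ℤ) * c q) * (X ^ (A q) * (1 - X) ^ (B q)) with hP
  refine ⟨P, ?_, ?_, ?_⟩
  · -- degree
    refine lt_of_le_of_lt (Polynomial.degree_sum_le _ _) ?_
    rw [Finset.sup_lt_iff (show (⊥ : WithBot ℕ) < (N : WithBot ℕ) from WithBot.bot_lt_coe _)]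
    intro q hq
    have h3 : A q + B q + 1 ≤ N := (hab q hq).2.2.1
    have h1X : (1 - X : Polynomial ℤ).degree = 1 := by
      rw [show (1 - X : Polynomial ℤ) = -(X - Polynomial.C 1) by simp, Polynomial.degree_neg,
        Polynomial.degree_X_sub_C]
    have hdeg : (X ^ (A q) * (1 - X) ^ (B q) : Polynomial ℤ).degree = ((A q + B q : ℕ) : WithBot ℕ) := by
      rw [Polynomial.degree_mul, Polynomial.degree_X_pow, Polynomial.degree_pow, h1X]
      simp [nsmul_eq_mul]
    calc (Polynomial.C ((k : ℤ) * c q) * (X ^ (A q) * (1 - X) ^ (B q)) : Polynomial ℤ).degree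
        ≤ (Polynomial.C ((k : ℤ) * c q)).degree + (X ^ (A q) * (1 - X) ^ (B q) : Polynomial ℤ).degree :=
          Polynomial.degree_mul_le _ _
      _ ≤ 0 + ((A q + B q : ℕ) : WithBot ℕ) := add_le_add Polynomial.degree_C_le (le_of_eq hdeg)
      _ = ((A q + B q : ℕ) : WithBot ℕ) := zero_add _
      _ < (N : WithBot ℕ) := by
          rw [Nat.cast_withBot, Nat.cast_withBot, WithBot.coe_lt_coe]
          omega
  · -- integral
    have hswap : (∫ x in (0:ℝ)..1, Polynomial.aeval x P)
        = ∑ q ∈ Finset.Icc 1 N, ∫ x in (0:ℝ)..1,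
            ((k : ℝ) * (c q : ℝ)) * (x ^ (A q) * (1-x) ^ (B q)) := by
      rw [hP]
      rw [← intervalIntegral.integral_finset_sum (fun q hq => by
        apply Continuous.intervalIntegrable; fun_prop)]
      apply intervalIntegral.integral_congr
      intro x _
      simp only [map_sum, map_mul, map_pow, Polynomial.aeval_X, Polynomial.aeval_C, map_sub,
        map_one, map_ofNat, eq_intCast, map_intCast, map_natCast]
    rw [hswap]
    have hterm : ∀ q ∈ Finset.Icc 1 N,
        (∫ x in (0:ℝ)..1, ((k : ℝ) * (c q : ℝ)) * (x ^ (A q) * (1-x) ^ (B q)))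
        = (k : ℝ) * ((c q : ℝ) / (d q : ℝ)) := by
      intro q hq
      rw [intervalIntegral.integral_const_mul, beta_int (B q) (A q)]
      rw [hd]
      field_simp
    rw [Finset.sum_congr rfl hterm, ← Finset.mul_sum, hc]
    have hL0 : (L : ℝ) ≠ 0 := by exact_mod_cast hLpos.ne'
    have hD0 : (D : ℝ) ≠ 0 := by exact_mod_cast hDpos.ne'
    have hkLR : (k : ℝ) * (L : ℝ) = (D : ℝ) := by exact_mod_cast hkL
    field_simp
    rw [hkLR]
    exact div_self hD0
  · -- divisibility
    rw [hP]
    apply Finset.dvd_sum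
    intro q hq
    have h1 : (X : Polynomial ℤ) ^ m ∣ X ^ (A q) := pow_dvd_pow _ (hab q hq).1
    have h2 : (1 - X : Polynomial ℤ) ^ m ∣ (1 - X) ^ (B q) := pow_dvd_pow _ (hab q hq).2.1
    have h3 := mul_dvd_mul h1 h2
    rw [← mul_pow] at h3
    exact h3.mul_left _
end

section
/- For every positive integer N, there exists an integer polynomial P of degree less than N with ∫₀¹ P(x)dx = 1/lcm{1,...,N} such that x^⌊N/2⌋ divides P(x) in ℤ[x]. -/
-- binary prime power dvd lcm
lemma pp_dvd_lcm2 {p k a b : ℕ} (hp : p.Prime) (ha : a ≠ 0) (hb : b ≠ 0)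
    (h : p ^ k ∣ Nat.lcm a b) : p ^ k ∣ a ∨ p ^ k ∣ b := by
  have hl : Nat.lcm a b ≠ 0 := Nat.lcm_ne_zero ha hb
  rw [hp.pow_dvd_iff_le_factorization hl, Nat.factorization_lcm ha hb,
    Finsupp.sup_apply, le_sup_iff] at h
  rcases h with h | h
  · exact Or.inl ((hp.pow_dvd_iff_le_factorization ha).2 h)
  · exact Or.inr ((hp.pow_dvd_iff_le_factorization hb).2 h)

lemma pp_dvd_finset_lcm {p k : ℕ} (hp : p.Prime) (hk : 0 < k) (s : Finset ℕ)
    (hs : ∀ i ∈ s, i ≠ 0) (h : p ^ k ∣ s.lcm id) : ∃ i ∈ s, p ^ k ∣ i := by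
  induction s using Finset.induction_on with
  | empty =>
    simp only [Finset.lcm_empty, Nat.dvd_one] at h
    exact absurd h (Nat.one_lt_pow hk.ne' hp.one_lt).ne'
  | @insert j s hj ih =>

    rw [Finset.lcm_insert] at h
    have hjne : j ≠ 0 := hs j (Finset.mem_insert_self j s)
    by_cases hsz : ∀ i ∈ s, i ≠ 0
    · by_cases hse : s.Nonempty
      · have hlne : s.lcm id ≠ 0 := by
          rw [Ne, Finset.lcm_eq_zero_iff]
          rintro ⟨i, hi, hi0⟩
          exact hsz i hi hi0
        rcases pp_dvd_lcm2 hp hjne hlne h with h | h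
        · exact ⟨j, Finset.mem_insert_self j s, h⟩
        · obtain ⟨i, hi, hd⟩ := ih hsz h
          exact ⟨i, Finset.mem_insert_of_mem hi, hd⟩
      · rw [Finset.not_nonempty_iff_eq_empty] at hse
        subst hse
        simp only [Finset.lcm_empty] at h
        rw [lcm_one_right] at h
        exact ⟨j, Finset.mem_insert_self j _, by simpa using h⟩
    · push_neg at hsz
      obtain ⟨i, hi, hi0⟩ := hsz
      exact absurd (hs i (Finset.mem_insert_of_mem hi)) (by simp [hi0])

lemma bezout_finset (s : Finset ℕ) (f : ℕ → ℤ) :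
    ∃ a : ℕ → ℤ, ∑ i ∈ s, a i * f i = s.gcd f := by
  induction s using Finset.induction_on with
  | empty => exact ⟨0, by simp⟩
  | @insert j s hj ih =>

    obtain ⟨a, ha⟩ := ih
    refine ⟨fun i => if i = j then Int.gcdA (f j) (s.gcd f)
      else Int.gcdB (f j) (s.gcd f) * a i, ?_⟩
    rw [Finset.gcd_insert, Finset.sum_insert hj]
    simp only [if_true]
    have : ∑ i ∈ s, (if i = j then Int.gcdA (f j) (s.gcd f)
        else Int.gcdB (f j) (s.gcd f) * a i) * f i
        = Int.gcdB (f j) (s.gcd f) * ∑ i ∈ s, a i * f i := by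
      rw [Finset.mul_sum]
      refine Finset.sum_congr rfl fun i hi => ?_
      rw [if_neg (by rintro rfl; exact hj hi), mul_assoc]
    rw [this, ha]
    have hg := Int.gcd_eq_gcd_ab (f j) (s.gcd f)
    have : (GCDMonoid.gcd (f j) (s.gcd f) : ℤ) = ↑(Int.gcd (f j) (s.gcd f)) := by
      rw [Int.coe_gcd]
    rw [this, hg]
    ring

lemma gcd_cast_int (s : Finset ℕ) (f : ℕ → ℕ) :
    s.gcd (fun i => (f i : ℤ)) = ((s.gcd f : ℕ) : ℤ) := by
  induction s using Finset.induction_on with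
  | empty => simp
  | @insert j s hj ih =>

    rw [Finset.gcd_insert, Finset.gcd_insert, ih]
    rw [← Int.coe_gcd, Int.gcd_natCast_natCast]
    rfl

lemma key_gcd (N : ℕ) (hN : 0 < N) :
    (Finset.Icc (N / 2 + 1) N).gcd (fun i => (Finset.Icc 1 N).lcm id / i) = 1 := by
  set L := (Finset.Icc 1 N).lcm id with hL
  rw [Nat.eq_one_iff_not_exists_prime_dvd]
  intro p hp hdvd
  set a := Nat.log p N with ha
  set k := p ^ a with hk
  have hk1 : 1 ≤ k := Nat.one_le_pow _ _ hp.pos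
  have hkN : k ≤ N := Nat.pow_log_le_self p hN.ne'
  set i₀ := k * (N / k) with hi₀
  have hmod : N % k + k * (N / k) = N := Nat.mod_add_div N k
  have hrlt : N % k < k := Nat.mod_lt N hk1
  have hi0N : i₀ ≤ N := by omega
  have hq1 : 1 ≤ N / k := (Nat.one_le_div_iff hk1).2 hkN
  have hi0pos : 0 < i₀ := Nat.mul_pos hk1 hq1
  have hhalf : N / 2 < i₀ := by
    rcases le_or_gt (2 * k) N with h2k | h2k
    · omega
    · have hq2 : N / k < 2 := (Nat.div_lt_iff_lt_mul hk1).2 (by omega)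
      have : N / k = 1 := by omega
      rw [hi₀, this, mul_one]
      omega
  have hmem : i₀ ∈ Finset.Icc (N / 2 + 1) N := Finset.mem_Icc.2 ⟨hhalf, hi0N⟩
  have hi0L : i₀ ∣ L := by
    have := Finset.dvd_lcm (f := id) (Finset.mem_Icc.2 ⟨hi0pos, hi0N⟩)
    simpa using this
  have hpd : p ∣ L / i₀ := hdvd.trans (Finset.gcd_dvd hmem)
  obtain ⟨t, ht⟩ := hpd
  have hLeq : L = p * t * i₀ := by
    rw [← ht, Nat.div_mul_cancel hi0L]
  have hppa' : p ^ (a + 1) ∣ L :=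
    ⟨t * (N / k), by rw [hLeq, hi₀, hk, pow_succ]; ring⟩
  obtain ⟨i, hi, hdi⟩ := pp_dvd_finset_lcm hp (Nat.succ_pos a) (Finset.Icc 1 N)
    (fun i hi => by simp only [Finset.mem_Icc] at hi; omega) hppa'
  simp only [Finset.mem_Icc] at hi
  have h1 : p ^ (a + 1) ≤ i := Nat.le_of_dvd (by omega) hdi
  have h2 : N < p ^ (a + 1) := Nat.lt_pow_succ_log_self hp.one_lt N
  omega

theorem stmt_17 (N : ℕ) (hN : 0 < N) :
    ∃ P : Polynomial ℤ, P.degree < N ∧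
      (∫ x in (0:ℝ)..1, Polynomial.aeval x P) = 1 / (((Finset.Icc 1 N).lcm id : ℕ) : ℝ) ∧
      Polynomial.X ^ (N / 2) ∣ P := by
  set L := (Finset.Icc 1 N).lcm id with hLdef
  set S := Finset.Icc (N / 2 + 1) N with hSdef
  have hL0 : L ≠ 0 := by
    rw [hLdef, Ne, Finset.lcm_eq_zero_iff]
    rintro ⟨i, hi, hi0⟩
    simp only [Finset.coe_Icc, Set.mem_Icc, Finset.mem_Icc, id_eq] at hi hi0
    omega
  have hgcdZ : S.gcd (fun i => ((L / i : ℕ) : ℤ)) = 1 := by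
    rw [gcd_cast_int, key_gcd N hN]; norm_num
  obtain ⟨a, ha⟩ := bezout_finset S (fun i => ((L / i : ℕ) : ℤ))
  rw [hgcdZ] at ha
  refine ⟨∑ i ∈ S, Polynomial.C (a i) * Polynomial.X ^ (i - 1), ?_, ?_, ?_⟩
  · refine lt_of_le_of_lt (Polynomial.degree_sum_le _ _) ?_
    rw [Finset.sup_lt_iff (by exact WithBot.bot_lt_coe N)]
    intro i hi
    refine lt_of_le_of_lt (Polynomial.degree_C_mul_X_pow_le _ _) ?_
    rw [hSdef, Finset.mem_Icc] at hi
    exact_mod_cast (by omega : i - 1 < N)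
  · have heval : ∀ x : ℝ, Polynomial.aeval x (∑ i ∈ S, Polynomial.C (a i) * Polynomial.X ^ (i - 1))
        = ∑ i ∈ S, (a i : ℝ) * x ^ (i - 1) := by
      intro x
      rw [map_sum]
      refine Finset.sum_congr rfl fun i hi => ?_
      simp [Polynomial.aeval_C]
    simp only [heval]
    rw [intervalIntegral.integral_finset_sum (f := fun i x => (a i : ℝ) * x ^ (i - 1)) (fun i _ =>
      ((continuous_const.mul (continuous_pow (i - 1)) : Continuous fun x : ℝ => (a i : ℝ) * x ^ (i - 1)).intervalIntegrable 0 1))]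
    have hterm : ∀ i ∈ S, (∫ x in (0:ℝ)..1, (a i : ℝ) * x ^ (i - 1))
        = ((a i : ℝ) * ((L : ℝ) / i)) / L := by
      intro i hi
      rw [hSdef, Finset.mem_Icc] at hi
      have hi1 : 1 ≤ i := by omega
      have hiL : i ∣ L := by
        have := Finset.dvd_lcm (f := id) (Finset.mem_Icc.2 ⟨hi1, hi.2⟩)
        simpa using this
      have hiR : (i : ℝ) ≠ 0 := by positivity
      have hLR : (L : ℝ) ≠ 0 := Nat.cast_ne_zero.2 hL0
      rw [intervalIntegral.integral_const_mul, integral_pow]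
      have : ((i - 1 : ℕ) : ℝ) + 1 = (i : ℝ) := by
        exact_mod_cast Nat.sub_add_cancel hi1
      rw [this]
      rw [one_pow, zero_pow (by omega : i - 1 + 1 ≠ 0)]
      field_simp
      ring
    rw [Finset.sum_congr rfl hterm, ← Finset.sum_div]
    have hsum : ∑ i ∈ S, (a i : ℝ) * ((L : ℝ) / i) = 1 := by
      have hcast : ∀ i ∈ S, (a i : ℝ) * ((L : ℝ) / i) = ((a i * ((L / i : ℕ) : ℤ) : ℤ) : ℝ) := by
        intro i hi
        rw [hSdef, Finset.mem_Icc] at hi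
        have hi1 : 1 ≤ i := by omega
        have hiL : i ∣ L := by
          have := Finset.dvd_lcm (f := id) (Finset.mem_Icc.2 ⟨hi1, hi.2⟩)
          simpa using this
        have h1 : (((L / i : ℕ)) : ℝ) = (L : ℝ) / i := Nat.cast_div hiL (by positivity)
        rw [Int.cast_mul, Int.cast_natCast, h1]
      rw [Finset.sum_congr rfl hcast, ← Int.cast_sum, ha, Int.cast_one]
    rw [hsum]
  · refine Finset.dvd_sum fun i hi => ?_
    rw [hSdef, Finset.mem_Icc] at hi
    exact Dvd.dvd.mul_left (pow_dvd_pow _ (by omega : N / 2 ≤ i - 1)) _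
end
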